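/- arXiv:2603.07710 — 2 statements merged into one kernel-verified Lean document; each statement's English description precedes it below -/
import Mathlib

section
/- Let H_r ∈ ℝ^{L×k_r} have full column rank, H_p ∈ ℝ^{L×k_p} with k_r < k_p ≤ L, W* = (H_rᵀH_r)⁻¹H_rᵀH_p, and R = H_p − H_rW* with singular values σ_1(R) ≥ σ_2(R) ≥ …. Then for every X ∈ ℝ^{L×(k_p−k_r)} and every A ∈ ℝ^{k_p×k_p}, ‖H_p − [H_r, X]A‖_F² ≥ Σ_{i > k_p−k_r} σ_i(R)². -/
/-!
Let `P = 1 - H_r (H_rᵀ H_r)⁻¹ H_rᵀ` be the orthogonal projector onto the complement of the column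
space of `H_r`. As `P H_r = 0` and `P H_p = R`, projecting the error shows
`‖H_p - [H_r, X] A‖_F ≥ ‖R - (P X) A₂‖_F`, where `A₂` is the lower block of `A`, and `(P X) A₂`
factors through `ℝ^(k_p - k_r)`. So it suffices to prove the Eckart–Young lower bound
`‖R - G D‖_F² ≥ Σ_{i ≥ r} σ_i²` for `G` of width `r`, and after the orthogonal change of
coordinates given by the SVD, for `R = Σ` rectangular diagonal. Row `i` of `Σ - G D` is `σ_i e_i`
minus a vector of the row space `K` of `D`, so its squared norm is at least `σ_i² dist(e_i, K)²`.
The defects `1 - dist(e_j, K)² = ‖P_K e_j‖²` sum to `trace P_K = dim K ≤ r`, and since the `σ_i²`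
decrease, the least favourable way to spend this budget is on the `r` largest of them.
-/

open Matrix

/-- Squared Frobenius norm of a real matrix: ‖M‖_F² = trace(MᵀM). -/
noncomputable def frobSq {m n : ℕ} (M : Matrix (Fin m) (Fin n) ℝ) : ℝ :=
  Matrix.trace (Mᵀ * M)

/-- The `L × k` rectangular diagonal matrix with diagonal entries `σ 0, σ 1, …`. -/
noncomputable def rectDiag (L k : ℕ) (σ : ℕ → ℝ) : Matrix (Fin L) (Fin k) ℝ :=
  Matrix.of fun i j => if (i : ℕ) = (j : ℕ) then σ (i : ℕ) else 0

open Finset Module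

theorem Antitone.sum_Ico_le_sum_range_mul {f w : ℕ → ℝ} (hf : Antitone f) {r m : ℕ}
    (hrm : r ≤ m) (hfr : 0 ≤ f r) (hw0 : ∀ i, 0 ≤ w i) (hw1 : ∀ i, w i ≤ 1)
    (hw : ∑ i ∈ range m, (1 - w i) ≤ r) :
    ∑ i ∈ Ico r m, f i ≤ ∑ i ∈ range m, f i * w i := by
  have hsplit (g : ℕ → ℝ) : ∑ i ∈ range m, g i = ∑ i ∈ range r, g i + ∑ i ∈ Ico r m, g i := by
    rw [range_eq_Ico, range_eq_Ico, sum_Ico_consecutive _ (Nat.zero_le r) hrm]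
  have hhead : f r * ∑ i ∈ range r, w i ≤ ∑ i ∈ range r, f i * w i := by
    rw [mul_sum]
    exact sum_le_sum fun i hi => mul_le_mul_of_nonneg_right (hf (mem_range.mp hi).le) (hw0 i)
  have htail : ∑ i ∈ Ico r m, f i * (1 - w i) ≤ f r * ∑ i ∈ Ico r m, (1 - w i) := by
    rw [mul_sum]
    exact sum_le_sum fun i hi =>
      mul_le_mul_of_nonneg_right (hf (mem_Ico.mp hi).1) (sub_nonneg.mpr (hw1 i))
  have hcount : f r * ∑ i ∈ range r, w i = f r * r - f r * ∑ i ∈ range r, (1 - w i) := by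
    simp [mul_sub]
  have hbudget : f r * ∑ i ∈ range m, (1 - w i) ≤ f r * r := mul_le_mul_of_nonneg_left hw hfr
  have hdecomp : ∑ i ∈ Ico r m, f i =
      ∑ i ∈ Ico r m, f i * (1 - w i) + ∑ i ∈ Ico r m, f i * w i := by
    rw [← sum_add_distrib]
    exact sum_congr rfl fun i _ => by ring
  rw [hsplit, mul_add] at hbudget
  rw [hsplit, hdecomp]
  linarith

theorem Submodule.sum_norm_sq_starProjection {E ι : Type*} [Fintype ι]
    [NormedAddCommGroup E] [InnerProductSpace ℝ E] [FiniteDimensional ℝ E]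
    (K : Submodule ℝ E) (b : OrthonormalBasis ι ℝ E) :
    ∑ i, ‖K.starProjection (b i)‖ ^ 2 = finrank ℝ K := by
  have htrace := (LinearMap.IsIdempotentElem.isProj_range _
    (ContinuousLinearMap.IsIdempotentElem.toLinearMap K.isIdempotentElem_starProjection)).trace
  rw [LinearMap.trace_eq_sum_inner _ b,
    show LinearMap.range (K.starProjection : E →ₗ[ℝ] E) = K from K.range_starProjection] at htrace
  rw [← htrace]
  refine sum_congr rfl fun i _ => ?_
  simpa [real_inner_comm] using (K.re_inner_starProjection_eq_normSq (b i)).symm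

theorem Submodule.norm_sub_starProjection_le {E : Type*}
    [NormedAddCommGroup E] [InnerProductSpace ℝ E]
    (K : Submodule ℝ E) [K.HasOrthogonalProjection] (x : E) {y : E} (hy : y ∈ K) :
    ‖x - K.starProjection x‖ ≤ ‖x - y‖ := by
  rw [K.starProjection_minimal]
  exact ciInf_le ⟨0, Set.forall_mem_range.mpr fun _ => norm_nonneg _⟩ (⟨y, hy⟩ : K)

theorem Submodule.norm_sub_starProjection_sq {E : Type*}
    [NormedAddCommGroup E] [InnerProductSpace ℝ E]
    (K : Submodule ℝ E) [K.HasOrthogonalProjection] (x : E) :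
    ‖x - K.starProjection x‖ ^ 2 = ‖x‖ ^ 2 - ‖K.starProjection x‖ ^ 2 := by
  rw [K.norm_sq_eq_add_norm_sq_starProjection x, K.starProjection_orthogonal_val]
  ring

theorem frobSq_eq_sum_norm_sq {m n : ℕ} (M : Matrix (Fin m) (Fin n) ℝ) :
    frobSq M = ∑ i, ‖WithLp.toLp 2 (M i)‖ ^ 2 := by
  simp only [EuclideanSpace.real_norm_sq_eq]
  simp only [frobSq, trace, Matrix.diag, mul_apply, transpose_apply, sq]
  exact sum_comm

theorem frobSq_nonneg {m n : ℕ} (M : Matrix (Fin m) (Fin n) ℝ) : 0 ≤ frobSq M := by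
  rw [frobSq_eq_sum_norm_sq]; positivity

theorem sum_Ico_sq_le_frobSq_rectDiag_sub_mul {L n r : ℕ} {σ : ℕ → ℝ} (hσ : Antitone σ)
    (hσ0 : ∀ i, 0 ≤ σ i) (G : Matrix (Fin L) (Fin r) ℝ) (D : Matrix (Fin r) (Fin n) ℝ) :
    ∑ i ∈ Ico r (min L n), σ i ^ 2 ≤ frobSq (rectDiag L n σ - G * D) := by
  rcases lt_or_ge (min L n) r with hr | hr
  · rw [Ico_eq_empty_of_le hr.le, sum_empty]
    exact frobSq_nonneg _
  let K : Submodule ℝ (EuclideanSpace ℝ (Fin n)) :=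
    Submodule.span ℝ (Set.range fun k => WithLp.toLp 2 (D k))
  let e : ℕ → EuclideanSpace ℝ (Fin n) :=
    fun a => WithLp.toLp 2 fun j => if a = (j : ℕ) then 1 else 0
  let w : ℕ → ℝ := fun a => ‖e a - K.starProjection (e a)‖ ^ 2
  have he_lt (j : Fin n) : e j = EuclideanSpace.single j 1 := by
    ext j'; simp [e, Fin.val_inj, eq_comm]
  have he_ge {a : ℕ} (ha : n ≤ a) : e a = 0 := by
    ext j; simp [e, (j.isLt.trans_le ha).ne']
  have hw_lt (j : Fin n) : w j = 1 - ‖K.starProjection (EuclideanSpace.single j 1)‖ ^ 2 := by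
    simp only [w, K.norm_sub_starProjection_sq, he_lt, PiLp.norm_single, norm_one, one_pow]
  have hw0 (a : ℕ) : 0 ≤ w a := sq_nonneg _
  have hw1 (a : ℕ) : w a ≤ 1 := by
    rcases lt_or_ge a n with ha | ha
    · exact (hw_lt ⟨a, ha⟩).trans_le (sub_le_self _ (sq_nonneg _))
    · simp [w, he_ge ha]
  have hbudget : ∑ a ∈ range (min L n), (1 - w a) ≤ r := calc
    ∑ a ∈ range (min L n), (1 - w a) ≤ ∑ a ∈ range n, (1 - w a) :=
      sum_le_sum_of_subset_of_nonneg (range_mono (min_le_right L n))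
        fun a _ _ => sub_nonneg.mpr (hw1 a)
    _ = ∑ j, ‖K.starProjection (EuclideanSpace.basisFun (Fin n) ℝ j)‖ ^ 2 := by
      rw [← Fin.sum_univ_eq_sum_range]
      refine sum_congr rfl fun j _ => ?_
      rw [hw_lt, EuclideanSpace.basisFun_apply, sub_sub_cancel]
    _ = finrank ℝ K := K.sum_norm_sq_starProjection _
    _ ≤ r := by
      exact_mod_cast (finrank_range_le_card _).trans (Fintype.card_fin r).le
  have hrow (i : Fin L) : σ i ^ 2 * w i ≤ ‖WithLp.toLp 2 ((rectDiag L n σ - G * D) i)‖ ^ 2 := by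
    have hmem : WithLp.toLp 2 ((G * D) i) ∈ K := by
      have hcomb : WithLp.toLp 2 ((G * D) i) = ∑ k, G i k • WithLp.toLp 2 (D k) := by
        ext j; simp [mul_apply]
      rw [hcomb]
      exact Submodule.sum_mem _ fun k _ => Submodule.smul_mem _ _ (Submodule.subset_span ⟨k, rfl⟩)
    have hdiag : WithLp.toLp 2 (rectDiag L n σ i) = σ i • e i := by
      ext j; simp [rectDiag, e]
    have := K.norm_sub_starProjection_le (σ i • e i) hmem
    rw [map_smul, ← smul_sub, norm_smul, Real.norm_of_nonneg (hσ0 i)] at this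
    rw [show WithLp.toLp 2 ((rectDiag L n σ - G * D) i)
      = WithLp.toLp 2 (rectDiag L n σ i) - WithLp.toLp 2 ((G * D) i) from rfl, hdiag]
    simpa only [mul_pow] using pow_le_pow_left₀ (mul_nonneg (hσ0 i) (norm_nonneg _)) this 2
  have hσsq : Antitone fun i => σ i ^ 2 := fun i j hij => pow_le_pow_left₀ (hσ0 j) (hσ hij) 2
  calc ∑ i ∈ Ico r (min L n), σ i ^ 2
      ≤ ∑ a ∈ range (min L n), σ a ^ 2 * w a :=
        hσsq.sum_Ico_le_sum_range_mul hr (sq_nonneg _) hw0 hw1 hbudget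
    _ ≤ ∑ a ∈ range L, σ a ^ 2 * w a :=
      sum_le_sum_of_subset_of_nonneg (range_mono (min_le_left L n))
        fun a _ _ => mul_nonneg (sq_nonneg _) (hw0 a)
    _ = ∑ i : Fin L, σ i ^ 2 * w i := (Fin.sum_univ_eq_sum_range (fun a => σ a ^ 2 * w a) L).symm
    _ ≤ ∑ i : Fin L, ‖WithLp.toLp 2 ((rectDiag L n σ - G * D) i)‖ ^ 2 :=
        sum_le_sum fun i _ => hrow i
    _ = frobSq (rectDiag L n σ - G * D) := (frobSq_eq_sum_norm_sq _).symm

theorem frobSq_mul_le_of_transpose_eq_of_idempotent {m n : ℕ} {P : Matrix (Fin m) (Fin m) ℝ}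
    (hPt : Pᵀ = P) (hPP : P * P = P) (M : Matrix (Fin m) (Fin n) ℝ) :
    frobSq (P * M) ≤ frobSq M := by
  have hgram (Q : Matrix (Fin m) (Fin m) ℝ) (hQt : Qᵀ = Q) (hQQ : Q * Q = Q) :
      (Q * M)ᵀ * (Q * M) = Mᵀ * (Q * M) := by
    rw [transpose_mul, hQt, Matrix.mul_assoc, ← Matrix.mul_assoc Q, hQQ]
  have hsplit : frobSq M = frobSq (P * M) + frobSq ((1 - P) * M) := by
    simp only [frobSq]
    rw [hgram P hPt hPP, hgram (1 - P) (by simp [hPt]) (by simp [sub_mul, mul_sub, hPP]),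
      ← trace_add, ← Matrix.mul_add, ← Matrix.add_mul, add_sub_cancel, Matrix.one_mul]
  linarith [frobSq_nonneg ((1 - P) * M)]

theorem frobSq_mul_mul_transpose {m n : ℕ} {U : Matrix (Fin m) (Fin m) ℝ}
    {V : Matrix (Fin n) (Fin n) ℝ} (hU : Uᵀ * U = 1) (hV : Vᵀ * V = 1)
    (M : Matrix (Fin m) (Fin n) ℝ) :
    frobSq (U * M * Vᵀ) = frobSq M := by
  simp only [frobSq, transpose_mul, transpose_transpose]
  have hcancel : V * (Mᵀ * Uᵀ) * (U * M * Vᵀ) = V * (Mᵀ * M * Vᵀ) := by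
    simp only [Matrix.mul_assoc]
    rw [← Matrix.mul_assoc Uᵀ, hU, Matrix.one_mul]
  rw [hcancel, trace_mul_comm, Matrix.mul_assoc, hV, Matrix.mul_one]

theorem sum_Ico_sq_le_frobSq_sub_mul {L n r : ℕ} {R : Matrix (Fin L) (Fin n) ℝ}
    {U : Matrix (Fin L) (Fin L) ℝ} {V : Matrix (Fin n) (Fin n) ℝ} {σ : ℕ → ℝ}
    (hU : Uᵀ * U = 1) (hU' : U * Uᵀ = 1) (hV : Vᵀ * V = 1) (hV' : V * Vᵀ = 1)
    (hσ : Antitone σ) (hσ0 : ∀ i, 0 ≤ σ i) (hSVD : R = U * rectDiag L n σ * Vᵀ)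
    (G : Matrix (Fin L) (Fin r) ℝ) (D : Matrix (Fin r) (Fin n) ℝ) :
    ∑ i ∈ Ico r (min L n), σ i ^ 2 ≤ frobSq (R - G * D) := by
  have hconj : R - G * D = U * (rectDiag L n σ - (Uᵀ * G) * (D * V)) * Vᵀ := by
    rw [hSVD, Matrix.mul_sub, Matrix.sub_mul]
    simp only [Matrix.mul_assoc, ← Matrix.mul_assoc U Uᵀ, hU', hV', Matrix.one_mul, Matrix.mul_one]
  rw [hconj, frobSq_mul_mul_transpose hU hV]
  exact sum_Ico_sq_le_frobSq_rectDiag_sub_mul hσ hσ0 _ _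

theorem Matrix.isUnit_of_rank_eq_card {n K : Type*} [Fintype n] [DecidableEq n] [Field K]
    {A : Matrix n n K} (hA : A.rank = Fintype.card n) : IsUnit A := by
  rw [← mulVec_surjective_iff_isUnit]
  have hrange : LinearMap.range A.mulVecLin = ⊤ :=
    Submodule.eq_top_of_finrank_eq (by rw [← Matrix.rank, hA, finrank_fintype_fun_eq_card])
  exact LinearMap.range_eq_top.mp hrange

section residualProj

variable {m n : Type*} [Fintype m] [DecidableEq m] [Fintype n] [DecidableEq n]

noncomputable def residualProj (H : Matrix m n ℝ) : Matrix m m ℝ :=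
  1 - H * (Hᵀ * H)⁻¹ * Hᵀ

variable {H : Matrix m n ℝ}

theorem residualProj_transpose (H : Matrix m n ℝ) : (residualProj H)ᵀ = residualProj H := by
  simp [residualProj, transpose_nonsing_inv, Matrix.mul_assoc]

theorem residualProj_mul (hH : IsUnit (Hᵀ * H)) : residualProj H * H = 0 := by
  rw [residualProj, Matrix.sub_mul, Matrix.one_mul, Matrix.mul_assoc, Matrix.mul_assoc H,
    nonsing_inv_mul _ ((isUnit_iff_isUnit_det _).mp hH), Matrix.mul_one,
    sub_self]

theorem residualProj_mul_self (hH : IsUnit (Hᵀ * H)) :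
    residualProj H * residualProj H = residualProj H := by
  nth_rewrite 2 [residualProj]
  rw [Matrix.mul_sub, Matrix.mul_one, Matrix.mul_assoc H, ← Matrix.mul_assoc _ H,
    residualProj_mul hH, Matrix.zero_mul, sub_zero]

end residualProj

theorem constrained_reconstruction_lower_bound_general {L kr kp : ℕ}
    (Hr : Matrix (Fin L) (Fin kr) ℝ) (Hp : Matrix (Fin L) (Fin kp) ℝ)
    (hrank : Hr.rank = kr)
    (Wstar : Matrix (Fin kr) (Fin kp) ℝ)
    (hW : Wstar = (Hrᵀ * Hr)⁻¹ * Hrᵀ * Hp)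
    (R : Matrix (Fin L) (Fin kp) ℝ)
    (hR : R = Hp - Hr * Wstar)
    (U : Matrix (Fin L) (Fin L) ℝ) (V : Matrix (Fin kp) (Fin kp) ℝ) (σ : ℕ → ℝ)
    (hU : Uᵀ * U = 1) (hU' : U * Uᵀ = 1)
    (hV : Vᵀ * V = 1) (hV' : V * Vᵀ = 1)
    (hσ : Antitone σ) (hσ0 : ∀ i, 0 ≤ σ i)
    (hSVD : R = U * rectDiag L kp σ * Vᵀ)
    (X : Matrix (Fin L) (Fin (kp - kr)) ℝ)
    (A : Matrix (Fin kr ⊕ Fin (kp - kr)) (Fin kp) ℝ) :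
    ∑ i ∈ Finset.Ico (kp - kr) (min L kp), σ i ^ 2 ≤
      frobSq (Hp - fromCols Hr X * A) := by
  have hgram : IsUnit (Hrᵀ * Hr) :=
    isUnit_of_rank_eq_card (by rw [rank_transpose_mul_self, hrank, Fintype.card_fin])
  have hPHp : residualProj Hr * Hp = R := by
    rw [hR, hW]
    simp only [residualProj, Matrix.sub_mul, Matrix.one_mul, Matrix.mul_assoc]
  have hPE : residualProj Hr * (Hp - fromCols Hr X * A) =
      R - (residualProj Hr * X) * A.toRows₂ := by
    conv_lhs => rw [← fromRows_toRows A, fromCols_mul_fromRows]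
    rw [Matrix.mul_sub, Matrix.mul_add, hPHp, ← Matrix.mul_assoc _ Hr, residualProj_mul hgram,
      Matrix.zero_mul, zero_add, Matrix.mul_assoc]
  calc ∑ i ∈ Finset.Ico (kp - kr) (min L kp), σ i ^ 2
      ≤ frobSq (R - (residualProj Hr * X) * A.toRows₂) :=
        sum_Ico_sq_le_frobSq_sub_mul hU hU' hV hV' hσ hσ0 hSVD _ _
    _ = frobSq (residualProj Hr * (Hp - fromCols Hr X * A)) := by rw [hPE]
    _ ≤ frobSq (Hp - fromCols Hr X * A) :=
        frobSq_mul_le_of_transpose_eq_of_idempotent (residualProj_transpose Hr)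
          (residualProj_mul_self hgram) _

/-- Lower bound for constrained reconstruction: for every `X` and `A`,
`‖H_p − [H_r, X]A‖_F² ≥ Σ_{i > k_p − k_r} σ_i(R)²`, where `σ 0 ≥ σ 1 ≥ …` are the
singular values of the residual `R = H_p − H_rW*` (given via an SVD `R = UΣVᵀ`). -/
theorem constrained_reconstruction_lower_bound {L kr kp : ℕ}
    (Hr : Matrix (Fin L) (Fin kr) ℝ) (Hp : Matrix (Fin L) (Fin kp) ℝ)
    (hk : kr < kp) (hL : kp ≤ L) (hrank : Hr.rank = kr)
    (Wstar : Matrix (Fin kr) (Fin kp) ℝ)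
    (hW : Wstar = (Hrᵀ * Hr)⁻¹ * Hrᵀ * Hp)
    (R : Matrix (Fin L) (Fin kp) ℝ)
    (hR : R = Hp - Hr * Wstar)
    (U : Matrix (Fin L) (Fin L) ℝ) (V : Matrix (Fin kp) (Fin kp) ℝ) (σ : ℕ → ℝ)
    (hU : Uᵀ * U = 1) (hU' : U * Uᵀ = 1)
    (hV : Vᵀ * V = 1) (hV' : V * Vᵀ = 1)
    (hσ : Antitone σ) (hσ0 : ∀ i, 0 ≤ σ i)
    (hSVD : R = U * rectDiag L kp σ * Vᵀ)
    (X : Matrix (Fin L) (Fin (kp - kr)) ℝ)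
    (A : Matrix (Fin kr ⊕ Fin (kp - kr)) (Fin kp) ℝ) :
    ∑ i ∈ Finset.Ico (kp - kr) (min L kp), σ i ^ 2 ≤
      frobSq (Hp - fromCols Hr X * A) :=
  constrained_reconstruction_lower_bound_general Hr Hp hrank Wstar hW R hR U V σ hU hU' hV hV' hσ
    hσ0 hSVD X A
end

section
/- Let H_r ∈ ℝ^{L×k_r} have full column rank, H_p ∈ ℝ^{L×k_p} with k_r < k_p ≤ L, W* = (H_rᵀH_r)⁻¹H_rᵀH_p, R = H_p − H_rW* with SVD R = UΣVᵀ and singular values σ_1(R) ≥ σ_2(R) ≥ …, and let H_res = R V_res where V_res consists of the first (k_p − k_r) columns of V. Then there exists A ∈ ℝ^{k_p×k_p} such that ‖H_p − [H_r, H_res]A‖_F² = Σ_{i > k_p−k_r} σ_i(R)². -/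
open Matrix

lemma finSumCollapse {n : ℕ} (k : ℕ) (hk : k < n) (f : Fin n → ℝ) :
    ∑ c : Fin n, (if (c : ℕ) = k then f c else 0) = f ⟨k, hk⟩ := by
  rw [Finset.sum_eq_single (⟨k, hk⟩ : Fin n)]
  · simp
  · intro b _ hb
    rw [if_neg]
    intro h; exact hb (Fin.ext h)
  · simp

lemma finSumCastLE {n m : ℕ} (h : m ≤ n) (f : Fin n → ℝ) :
    ∑ c : Fin m, f (Fin.castLE h c) = ∑ a : Fin n, if (a : ℕ) < m then f a else 0 := by
  classical
  set g : ℕ → ℝ := fun x => if hx : x < n then f ⟨x, hx⟩ else 0 with hg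
  have h1 : ∑ c : Fin m, f (Fin.castLE h c) = ∑ x ∈ Finset.range m, g x := by
    rw [← Fin.sum_univ_eq_sum_range]
    refine Finset.sum_congr rfl fun c _ => ?_
    simp only [g, dif_pos (c.2.trans_le h)]
    rfl
  have h2 : ∑ a : Fin n, (if (a : ℕ) < m then f a else 0)
      = ∑ x ∈ Finset.range n, (if x < m then g x else 0) := by
    rw [← Fin.sum_univ_eq_sum_range]
    refine Finset.sum_congr rfl fun a _ => ?_
    simp only [g, dif_pos a.2]
  have h3 : ∑ x ∈ Finset.range n, (if x < m then g x else 0)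
      = ∑ x ∈ Finset.range m, g x := by
    rw [← Finset.sum_filter]
    congr 1
    ext x
    simp only [Finset.mem_filter, Finset.mem_range]
    omega
  rw [h1, h2, h3]

/-- Achievability: with `H_res = R V_res`, where `V_res` consists of the first
`k_p − k_r` columns of the right singular matrix `V` of `R`, there exists `A`
with `‖H_p − [H_r, H_res]A‖_F² = Σ_{i > k_p − k_r} σ_i(R)²`. -/
theorem constrained_reconstruction_achievability {L kr kp : ℕ}
    (Hr : Matrix (Fin L) (Fin kr) ℝ) (Hp : Matrix (Fin L) (Fin kp) ℝ)
    (hk : kr < kp) (hL : kp ≤ L) (hrank : Hr.rank = kr)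
    (Wstar : Matrix (Fin kr) (Fin kp) ℝ)
    (hW : Wstar = (Hrᵀ * Hr)⁻¹ * Hrᵀ * Hp)
    (R : Matrix (Fin L) (Fin kp) ℝ)
    (hR : R = Hp - Hr * Wstar)
    (U : Matrix (Fin L) (Fin L) ℝ) (V : Matrix (Fin kp) (Fin kp) ℝ) (σ : ℕ → ℝ)
    (hU : Uᵀ * U = 1) (hU' : U * Uᵀ = 1)
    (hV : Vᵀ * V = 1) (hV' : V * Vᵀ = 1)
    (hσ : Antitone σ) (hσ0 : ∀ i, 0 ≤ σ i)
    (hSVD : R = U * rectDiag L kp σ * Vᵀ)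
    (Vres : Matrix (Fin kp) (Fin (kp - kr)) ℝ)
    (hVres : Vres = V.submatrix id (Fin.castLE (Nat.sub_le kp kr)))
    (Hres : Matrix (Fin L) (Fin (kp - kr)) ℝ)
    (hHres : Hres = R * Vres) :
    ∃ A : Matrix (Fin kr ⊕ Fin (kp - kr)) (Fin kp) ℝ,
      frobSq (Hp - fromCols Hr Hres * A) =
        ∑ i ∈ Finset.Ico (kp - kr) (min L kp), σ i ^ 2 := by
  classical
  set S := rectDiag L kp σ with hS
  set M : Matrix (Fin L) (Fin kp) ℝ :=
    Matrix.of (fun i j => if (i : ℕ) = (j : ℕ) ∧ kp - kr ≤ (i : ℕ) then σ (i : ℕ) else 0) with hM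
  -- Vᵀ * Vres is the rectangular "identity inclusion"
  have hι : Vᵀ * Vres
      = (1 : Matrix (Fin kp) (Fin kp) ℝ).submatrix id (Fin.castLE (Nat.sub_le kp kr)) := by
    ext i j
    have h := congrFun (congrFun hV i) (Fin.castLE (Nat.sub_le kp kr) j)
    simp only [hVres, Matrix.mul_apply, Matrix.submatrix_apply, Matrix.transpose_apply, id_eq] at h ⊢
    exact h
  -- S * ι = rectDiag L (kp - kr) σ
  have h1 : S * ((1 : Matrix (Fin kp) (Fin kp) ℝ).submatrix id (Fin.castLE (Nat.sub_le kp kr)))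
      = rectDiag L (kp - kr) σ := by
    ext i j
    simp only [Matrix.mul_apply, Matrix.submatrix_apply, Matrix.one_apply, hS, rectDiag,
      Matrix.of_apply, id_eq, mul_ite, mul_one, mul_zero]
    rw [Finset.sum_ite_eq' Finset.univ (Fin.castLE (Nat.sub_le kp kr) j)
      (fun c => if (i : ℕ) = (c : ℕ) then σ (i : ℕ) else 0)]
    simp
  -- rectDiag L (kp-kr) σ * Vresᵀ = (S - M) * Vᵀ
  have h2 : rectDiag L (kp - kr) σ * Vresᵀ = (S - M) * Vᵀ := by
    ext i j
    have lhs : (rectDiag L (kp - kr) σ * Vresᵀ) i j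
        = ∑ c : Fin (kp - kr),
            (fun a : Fin kp => (if (i : ℕ) = (a : ℕ) then σ (i : ℕ) else 0) * V j a)
              (Fin.castLE (Nat.sub_le kp kr) c) := by
      simp [Matrix.mul_apply, rectDiag, hVres, Matrix.submatrix_apply]
    refine lhs.trans ((finSumCastLE (Nat.sub_le kp kr)
      (fun a : Fin kp => (if (i : ℕ) = (a : ℕ) then σ (i : ℕ) else 0) * V j a)).trans ?_)
    simp only [Matrix.mul_apply, Matrix.sub_apply, hS, hM, rectDiag, Matrix.of_apply,
      Matrix.transpose_apply]
    refine Finset.sum_congr rfl fun a _ => ?_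
    split_ifs <;> try ring
    all_goals (exfalso; omega)
  -- the residual after reconstruction
  refine ⟨fromRows Wstar Vresᵀ, ?_⟩
  have hres : Hp - fromCols Hr Hres * fromRows Wstar Vresᵀ = U * M * Vᵀ := by
    rw [fromCols_mul_fromRows, hHres, hR]
    have step : Hp - (Hr * Wstar + (Hp - Hr * Wstar) * Vres * Vresᵀ)
        = (Hp - Hr * Wstar) - (Hp - Hr * Wstar) * Vres * Vresᵀ := by abel
    rw [step, ← hR, hSVD]
    rw [Matrix.mul_assoc (U * S) Vᵀ Vres, Matrix.mul_assoc U S (Vᵀ * Vres),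
      Matrix.mul_assoc U (S * (Vᵀ * Vres)) Vresᵀ, hι]
    rw [h1, h2]
    rw [Matrix.sub_mul, Matrix.mul_sub, Matrix.mul_assoc, Matrix.mul_assoc]
    abel
  rw [hres]
  -- unitary invariance
  have hfrob : frobSq (U * M * Vᵀ) = frobSq M := by
    unfold frobSq
    have key : (U * M * Vᵀ)ᵀ * (U * M * Vᵀ) = V * (Mᵀ * M) * Vᵀ := by
      simp only [Matrix.transpose_mul, Matrix.transpose_transpose, Matrix.mul_assoc]
      rw [← Matrix.mul_assoc Uᵀ U (M * Vᵀ), hU, Matrix.one_mul]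
    rw [key, Matrix.trace_mul_cycle, ← Matrix.mul_assoc, hV, Matrix.one_mul]
  rw [hfrob]
  -- compute frobSq M
  unfold frobSq
  have hmin : min L kp = kp := min_eq_right hL
  rw [hmin]
  simp only [Matrix.trace, Matrix.diag_apply, Matrix.mul_apply, Matrix.transpose_apply]
  have inner : ∀ j : Fin kp,
      (∑ i : Fin L, M i j * M i j)
        = if kp - kr ≤ (j : ℕ) then σ (j : ℕ) * σ (j : ℕ) else 0 := by
    intro j
    have step : ∀ i : Fin L, M i j * M i j
        = if (i : ℕ) = (j : ℕ) then
            (fun i' : Fin L => if kp - kr ≤ (i' : ℕ) then σ (i' : ℕ) * σ (i' : ℕ) else 0) i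
          else 0 := by
      intro i
      simp only [hM, Matrix.of_apply]
      by_cases hij : (i : ℕ) = (j : ℕ)
      · rw [if_pos hij]
        by_cases hle : kp - kr ≤ (i : ℕ)
        · rw [if_pos ⟨hij, hle⟩, if_pos hle]
        · rw [if_neg (by tauto), if_neg hle, mul_zero]
      · rw [if_neg hij, if_neg (by tauto), mul_zero]
    rw [Finset.sum_congr rfl (fun i _ => step i),
      finSumCollapse (j : ℕ) (lt_of_lt_of_le j.2 hL)]
  rw [Finset.sum_congr rfl (fun j _ => inner j)]
  rw [Fin.sum_univ_eq_sum_range (fun x => if kp - kr ≤ x then σ x * σ x else 0) kp]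
  rw [← Finset.sum_filter]
  refine Finset.sum_congr ?_ fun x _ => (pow_two (σ x)).symm ▸ rfl
  ext x
  simp only [Finset.mem_filter, Finset.mem_range, Finset.mem_Ico]
  omega
end
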